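/- The horizontal and vertical switches preserve the invariant K: for every (x,y) ∈ ℝ², K(−x + |y|, y) = K(x,y) and K(x, −y + |x|) = K(x,y). In other words, for a point P = (x,y) on the nonagon Υ_κ, the point (−x+|y|, y) obtained as the second intersection of the horizontal line through P with Υ_κ again lies on Υ_κ, and similarly for the vertical switch. -/

import Mathlib

/-- `H(x,y) = max(x, -y, -x+y, -x-y)`. -/
noncomputable def H (x y : ℝ) : ℝ :=
  max x (max (-y) (max (-x + y) (-x - y)))

/-- `K(x,y) = min(H(x,y), H(y,x))`. -/
noncomputable def K (p : ℝ × ℝ) : ℝ :=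
  min (H p.1 p.2) (H p.2 p.1)

/- The reflection `x ↦ -x + |y|` exchanges the two terms `x` and `-x + |y|` (or `x` and
`-x - y` when `y ≤ 0`) of the maximum, and the other terms stay dominated. -/
lemma H_neg_add_abs_left (x y : ℝ) : H (-x + |y|) y = H x y := by
  unfold H
  rcases abs_cases y with ⟨h, -⟩ | ⟨h, -⟩ <;> rw [h] <;> grind

lemma H_right_neg_add_self {x y : ℝ} (hy : 0 ≤ y) : H y (-x + y) = H y x := by
  unfold H
  grind

lemma H_le_H_swap_of_nonpos {x y : ℝ} (hy : y ≤ 0) : H x y ≤ H y x := by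
  unfold H
  grind

lemma K_eq_H_of_nonpos {x y : ℝ} (hy : y ≤ 0) : K (x, y) = H x y :=
  min_eq_left (H_le_H_swap_of_nonpos hy)

lemma K_swap (p : ℝ × ℝ) : K p.swap = K p :=
  min_comm _ _

lemma K_neg_add_abs_left (x y : ℝ) : K (-x + |y|, y) = K (x, y) := by
  rcases le_total 0 y with hy | hy
  · simp only [K]
    rw [H_neg_add_abs_left, abs_of_nonneg hy, H_right_neg_add_self hy]
  · rw [K_eq_H_of_nonpos hy, K_eq_H_of_nonpos hy, H_neg_add_abs_left]

theorem switches_preserve_K (x y : ℝ) :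
    K (-x + |y|, y) = K (x, y) ∧ K (x, -y + |x|) = K (x, y) :=
  ⟨K_neg_add_abs_left x y, by
    rw [← K_swap, Prod.swap_prod_mk, K_neg_add_abs_left, ← K_swap, Prod.swap_prod_mk]⟩
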